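/- Let 𝒳 be a finite alphabet, let P, Q ∈ 𝒫(𝒳) have full support, and let λ > 0. Then the equation GJS(P, Q, α) = λα has a solution α > 0 if and only if λ < D(P‖Q), and when a positive solution exists it is unique. -/

import Mathlib

/-!
Because the mixture `P_α` keeps total mass one, `d/dα GJS(P,Q,α) = D(P‖P_α)`, and
`GJS(P,Q,0) = 0`. As `α` grows, `P_α` moves along the segment from `Q` towards `P`, so by
convexity of `D(P‖·)` this derivative decreases strictly from `D(P‖Q)` when `P ≠ Q` (and
`GJS(P,P,·) = 0` has no positive solution). By the mean value theorem a positive solution `α`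
yields `c ∈ (0, α)` with `λ = D(P‖P_c) < D(P‖Q)`, and two positive solutions would yield two
distinct such `c`. Conversely, if `λ < D(P‖Q)` then `GJS(P,Q,α) - λα` is positive for small
`α > 0` and negative for large `α`, because `GJS(P,Q,α) ≤ D(P‖Q) + D(Q‖P)`.
-/

open Filter

namespace SeqClass

variable {𝒳 : Type*} [Fintype 𝒳] [DecidableEq 𝒳]

/-- `P` is a probability mass function on `𝒳`. -/
def IsPMF (P : 𝒳 → ℝ) : Prop := (∀ x, 0 ≤ P x) ∧ ∑ x, P x = 1

/-- `P` has full support. -/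
def FullSupport (P : 𝒳 → ℝ) : Prop := ∀ x, 0 < P x

/-- Kullback–Leibler divergence `D(P‖Q)`. -/
noncomputable def KL (P Q : 𝒳 → ℝ) : ℝ := ∑ x, P x * Real.log (P x / Q x)

/-- Shannon entropy `H(P)`. -/
noncomputable def shEnt (P : 𝒳 → ℝ) : ℝ := -∑ x, P x * Real.log (P x)

/-- The mixture `(α•P + Q)/(1+α)`. -/
noncomputable def mix (P Q : 𝒳 → ℝ) (α : ℝ) : 𝒳 → ℝ := fun x => (α * P x + Q x) / (1 + α)

/-- Generalized Jensen–Shannon divergence `GJS(P,Q,α) = α D(P‖P_α) + D(Q‖P_α)`. -/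
noncomputable def GJS (P Q : 𝒳 → ℝ) (α : ℝ) : ℝ := α * KL P (mix P Q α) + KL Q (mix P Q α)

/-- Chernoff information `C(P,Q)`. -/
noncomputable def chernoff (P Q : 𝒳 → ℝ) : ℝ :=
  -(⨅ η : (Set.Icc (0:ℝ) 1), Real.log (∑ x, P x ^ (η : ℝ) * Q x ^ (1 - (η : ℝ))))

/-- Empirical distribution (type) of a finite sequence. -/
noncomputable def empDist {n : ℕ} (x : Fin n → 𝒳) : 𝒳 → ℝ :=
  fun a => ((Finset.univ.filter fun i => x i = a).card : ℝ) / n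

/-- Type of the length-`n` prefix of `y`. -/
noncomputable def prefixType {m : ℕ} (y : Fin m → 𝒳) (n : ℕ) : 𝒳 → ℝ :=
  fun a => ((Finset.univ.filter fun k : Fin m => (k : ℕ) < n ∧ y k = a).card : ℝ) / n

/-- i.i.d. product probability of a finite sequence. -/
noncomputable def prodProb {n : ℕ} (P : 𝒳 → ℝ) (x : Fin n → 𝒳) : ℝ := ∏ i, P (x i)

open Real Set

section Divergence

variable {ι : Type*} [Fintype ι] {P R : ι → ℝ}

lemma mul_log_div (a : ℝ) {b : ℝ} (hb : b ≠ 0) : a * log (a / b) = a * log a - a * log b := by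
  rcases eq_or_ne a 0 with rfl | ha
  · simp
  · rw [log_div ha hb, mul_sub]

lemma KL_self (P : ι → ℝ) : KL P P = 0 :=
  Finset.sum_eq_zero fun x _ => by rcases eq_or_ne (P x) 0 with h | h <;> simp [h]

lemma KL_eq_sum_mul_klFun (hR : ∀ x, 0 < R x) (hsum : ∑ x, P x = ∑ x, R x) :
    KL P R = ∑ x, R x * InformationTheory.klFun (P x / R x) := by
  have hterm : ∀ x, R x * InformationTheory.klFun (P x / R x)
      = P x * log (P x / R x) + (R x - P x) := fun x => by
    have := (hR x).ne'
    rw [InformationTheory.klFun_apply]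
    field_simp
    ring
  simp only [hterm, Finset.sum_add_distrib, Finset.sum_sub_distrib, hsum, sub_self, add_zero, KL]

lemma KL_nonneg (hP : ∀ x, 0 ≤ P x) (hR : ∀ x, 0 < R x) (hsum : ∑ x, P x = ∑ x, R x) :
    0 ≤ KL P R := by
  rw [KL_eq_sum_mul_klFun hR hsum]
  exact Finset.sum_nonneg fun x _ =>
    mul_nonneg (hR x).le (InformationTheory.klFun_nonneg (div_nonneg (hP x) (hR x).le))

lemma KL_pos (hP : ∀ x, 0 ≤ P x) (hR : ∀ x, 0 < R x) (hsum : ∑ x, P x = ∑ x, R x)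
    (hne : P ≠ R) : 0 < KL P R := by
  obtain ⟨x₀, hx₀⟩ := Function.ne_iff.mp hne
  have hkl : ∀ x, 0 ≤ InformationTheory.klFun (P x / R x) := fun x =>
    InformationTheory.klFun_nonneg (div_nonneg (hP x) (hR x).le)
  have hkl₀ : InformationTheory.klFun (P x₀ / R x₀) ≠ 0 := by
    rw [Ne, InformationTheory.klFun_eq_zero_iff (div_nonneg (hP x₀) (hR x₀).le),
      div_eq_one_iff_eq (hR x₀).ne']
    exact hx₀
  rw [KL_eq_sum_mul_klFun hR hsum]
  exact Finset.sum_pos' (fun x _ => mul_nonneg (hR x).le (hkl x))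
    ⟨x₀, Finset.mem_univ _, mul_pos (hR x₀) ((hkl x₀).lt_of_ne' hkl₀)⟩

lemma KL_convex_comb_le {S T : ι → ℝ} (hP : ∀ x, 0 ≤ P x) (hS : ∀ x, 0 < S x)
    (hT : ∀ x, 0 < T x) {t : ℝ} (ht₀ : 0 ≤ t) (ht₁ : t ≤ 1) :
    KL P (fun x => t * S x + (1 - t) * T x) ≤ t * KL P S + (1 - t) * KL P T := by
  simp only [KL, Finset.mul_sum, ← Finset.sum_add_distrib]
  refine Finset.sum_le_sum fun x _ => ?_
  have hlog : t * log (S x) + (1 - t) * log (T x) ≤ log (t * S x + (1 - t) * T x) :=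
    strictConcaveOn_log_Ioi.concaveOn.2 (hS x) (hT x) ht₀ (by linarith) (by ring)
  have hm : 0 < t * S x + (1 - t) * T x := by
    rcases ht₀.lt_or_eq with ht | rfl
    · nlinarith [hS x, hT x]
    · simpa using hT x
  rw [mul_log_div _ hm.ne', mul_log_div _ (hS x).ne', mul_log_div _ (hT x).ne']
  nlinarith [hP x]

lemma hasDerivAt_KL {R : ℝ → ι → ℝ} {R' : ι → ℝ} {t : ℝ}
    (hR : ∀ x, HasDerivAt (fun s => R s x) (R' x) t) (hne : ∀ x, R t x ≠ 0) :
    HasDerivAt (fun s => KL P (R s)) (-∑ x, P x * R' x / R t x) t := by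
  simp only [KL, ← Finset.sum_neg_distrib]
  refine HasDerivAt.fun_sum fun x _ => ?_
  rcases eq_or_ne (P x) 0 with hPx | hPx
  · simpa [hPx] using hasDerivAt_const t (0 : ℝ)
  refine ((((hasDerivAt_const t (P x)).fun_div (hR x) (hne x)).log
    (div_ne_zero hPx (hne x))).const_mul (P x)).congr_deriv ?_
  have := hne x
  field_simp
  ring

end Divergence

section Mixture

variable {ι : Type*} {P Q : ι → ℝ} {a b α : ℝ}

lemma mix_zero (P Q : ι → ℝ) : mix P Q 0 = Q := by
  funext x
  simp [mix]

lemma mix_self (h : 1 + α ≠ 0) : mix P P α = P := by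
  funext x
  simp only [mix]
  field_simp
  ring

lemma mix_pos (hsP : FullSupport P) (hsQ : FullSupport Q) (hα : 0 ≤ α) (x : ι) :
    0 < mix P Q α x :=
  div_pos (by nlinarith [hsP x, hsQ x]) (by linarith)

lemma mix_ne_left (hne : P ≠ Q) (h : 1 + α ≠ 0) : mix P Q α ≠ P := by
  obtain ⟨x, hx⟩ := Function.ne_iff.mp hne
  intro heq
  have := congrFun heq x
  simp only [mix] at this
  field_simp at this
  exact hx (by linarith)

lemma mix_eq_convex_comb (ha : 1 + a ≠ 0) (hb : 1 + b ≠ 0) :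
    mix P Q b = fun x => (b - a) / (1 + b) * P x + (1 - (b - a) / (1 + b)) * mix P Q a x := by
  funext x
  simp only [mix]
  field_simp
  ring

lemma hasDerivAt_mix (x : ι) (h : 1 + α ≠ 0) :
    HasDerivAt (fun s => mix P Q s x) ((P x - Q x) / (1 + α) ^ 2) α := by
  have hnum : HasDerivAt (fun s => s * P x + Q x) (P x) α := by
    simpa using ((hasDerivAt_id α).mul_const (P x)).add_const (Q x)
  have hden : HasDerivAt (fun s => 1 + s) 1 α := by
    simpa using (hasDerivAt_id α).const_add 1
  refine (hnum.fun_div hden h).congr_deriv ?_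
  ring

variable [Fintype ι]

lemma sum_mix (hsum : ∑ x, P x = ∑ x, Q x) (h : 1 + α ≠ 0) :
    ∑ x, mix P Q α x = ∑ x, P x := by
  simp only [mix, ← Finset.sum_div, Finset.sum_add_distrib, ← Finset.mul_sum, ← hsum]
  field_simp
  ring

lemma KL_mix_strictAntiOn (hsP : FullSupport P) (hsQ : FullSupport Q)
    (hsum : ∑ x, P x = ∑ x, Q x) (hne : P ≠ Q) :
    StrictAntiOn (fun α => KL P (mix P Q α)) (Ici 0) := by
  intro a ha b hb hab
  have ha' : 1 + a ≠ 0 := by simp only [mem_Ici] at ha; positivity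
  have hb' : (0 : ℝ) < 1 + b := by simp only [mem_Ici] at hb; positivity
  set t := (b - a) / (1 + b)
  have ht₀ : 0 < t := div_pos (by linarith) hb'
  have ht₁ : t ≤ 1 := (div_le_one hb').mpr (by linarith [mem_Ici.mp ha])
  have hconv := KL_convex_comb_le (fun x => (hsP x).le) hsP (mix_pos hsP hsQ ha) ht₀.le ht₁
  rw [← mix_eq_convex_comb ha' hb'.ne', KL_self, mul_zero, zero_add] at hconv
  have hpos : 0 < KL P (mix P Q a) :=
    KL_pos (fun x => (hsP x).le) (mix_pos hsP hsQ ha) (sum_mix hsum ha').symm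
      (mix_ne_left hne ha').symm
  simp only
  nlinarith

end Mixture

section GeneralizedJensenShannon

variable {ι : Type*} [Fintype ι] {P Q : ι → ℝ} {a b α β lam : ℝ}

lemma GJS_zero (P Q : ι → ℝ) : GJS P Q 0 = 0 := by
  simp [GJS, mix_zero, KL_self]

lemma GJS_self (h : 1 + α ≠ 0) : GJS P P α = 0 := by
  simp [GJS, mix_self h, KL_self]

lemma hasDerivAt_GJS (hsum : ∑ x, P x = ∑ x, Q x) (h : 1 + α ≠ 0)
    (hm : ∀ x, α * P x + Q x ≠ 0) : HasDerivAt (GJS P Q) (KL P (mix P Q α)) α := by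
  have hmix : ∀ x, mix P Q α x ≠ 0 := fun x => div_ne_zero (hm x) h
  have hKL (R : ι → ℝ) := hasDerivAt_KL (P := R) (fun x => hasDerivAt_mix (P := P) (Q := Q) x h) hmix
  have hterm : ∀ x, α * (P x * ((P x - Q x) / (1 + α) ^ 2) / mix P Q α x)
      + Q x * ((P x - Q x) / (1 + α) ^ 2) / mix P Q α x = (P x - Q x) / (1 + α) := by
    intro x
    have := hm x
    simp only [mix]
    field_simp
  have hcancel : α * ∑ x, P x * ((P x - Q x) / (1 + α) ^ 2) / mix P Q α x
      + ∑ x, Q x * ((P x - Q x) / (1 + α) ^ 2) / mix P Q α x = 0 := by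
    rw [Finset.mul_sum, ← Finset.sum_add_distrib, Finset.sum_congr rfl fun x _ => hterm x,
      ← Finset.sum_div, Finset.sum_sub_distrib, hsum, sub_self, zero_div]
  refine (((hasDerivAt_id α).mul (hKL P)).add (hKL Q)).congr_deriv ?_
  simp only [id]
  linear_combination -hcancel

lemma hasDerivAt_GJS_of_nonneg (hsP : FullSupport P) (hsQ : FullSupport Q)
    (hsum : ∑ x, P x = ∑ x, Q x) (hα : 0 ≤ α) :
    HasDerivAt (GJS P Q) (KL P (mix P Q α)) α :=
  hasDerivAt_GJS hsum (by positivity) fun x => (by nlinarith [hsP x, hsQ x] : 0 < α * P x + Q x).ne'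

lemma GJS_le (hsP : FullSupport P) (hsQ : FullSupport Q) (hα : 0 ≤ α) :
    GJS P Q α ≤ α / (1 + α) * (KL P Q + KL Q P) := by
  have h1 : 0 < 1 + α := by positivity
  set t := α / (1 + α)
  have ht₁ : t ≤ 1 := (div_le_one h1).mpr (by linarith)
  have hmix : mix P Q α = fun x => t * P x + (1 - t) * Q x := by
    simpa [mix_zero] using mix_eq_convex_comb (P := P) (Q := Q) (a := 0) (b := α) (by simp) h1.ne'
  have hKLP := KL_convex_comb_le (fun x => (hsP x).le) hsP hsQ (by positivity) ht₁
  have hKLQ := KL_convex_comb_le (fun x => (hsQ x).le) hsP hsQ (by positivity) ht₁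
  rw [KL_self, ← hmix] at hKLP hKLQ
  have hαt : α * (1 - t) = t := by
    simp only [t]
    field_simp
    ring
  calc GJS P Q α = α * KL P (mix P Q α) + KL Q (mix P Q α) := rfl
    _ ≤ α * ((1 - t) * KL P Q) + t * KL Q P := by gcongr <;> linarith
    _ = t * (KL P Q + KL Q P) := by rw [← mul_assoc, hαt, mul_add]

lemma exists_mem_Ioo_KL_mix_eq (hsP : FullSupport P) (hsQ : FullSupport Q)
    (hsum : ∑ x, P x = ∑ x, Q x) (ha : 0 ≤ a) (hab : a < b) (ha' : GJS P Q a = lam * a)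
    (hb' : GJS P Q b = lam * b) : ∃ c ∈ Ioo a b, KL P (mix P Q c) = lam := by
  have hderiv : ∀ c ∈ Icc a b, HasDerivAt (GJS P Q) (KL P (mix P Q c)) c := fun c hc =>
    hasDerivAt_GJS_of_nonneg hsP hsQ hsum (ha.trans hc.1)
  obtain ⟨c, hc, hslope⟩ := exists_hasDerivAt_eq_slope (GJS P Q) (fun c => KL P (mix P Q c)) hab
    (fun c hc => (hderiv c hc).continuousAt.continuousWithinAt)
    (fun c hc => hderiv c (Ioo_subset_Icc_self hc))
  refine ⟨c, hc, ?_⟩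
  rw [hslope, ha', hb', ← mul_sub, mul_div_assoc, div_self (sub_pos.mpr hab).ne', mul_one]

lemma ne_of_GJS_eq_mul (hlam : 0 < lam) (hα : 0 < α) (h : GJS P Q α = lam * α) : P ≠ Q := by
  rintro rfl
  rw [GJS_self (by positivity)] at h
  nlinarith

lemma lt_KL_of_GJS_eq_mul (hsP : FullSupport P) (hsQ : FullSupport Q)
    (hsum : ∑ x, P x = ∑ x, Q x) (hlam : 0 < lam) (hα : 0 < α) (h : GJS P Q α = lam * α) :
    lam < KL P Q := by
  obtain ⟨c, hc, hKL⟩ :=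
    exists_mem_Ioo_KL_mix_eq hsP hsQ hsum le_rfl hα (by rw [GJS_zero, mul_zero]) h
  calc lam = KL P (mix P Q c) := hKL.symm
    _ < KL P (mix P Q 0) := KL_mix_strictAntiOn hsP hsQ hsum (ne_of_GJS_eq_mul hlam hα h)
      self_mem_Ici hc.1.le hc.1
    _ = KL P Q := by rw [mix_zero]

lemma eq_of_GJS_eq_mul (hsP : FullSupport P) (hsQ : FullSupport Q)
    (hsum : ∑ x, P x = ∑ x, Q x) (hlam : 0 < lam) (hα : 0 < α) (hβ : 0 < β)
    (h : GJS P Q α = lam * α) (h' : GJS P Q β = lam * β) : α = β := by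
  wlog hlt : α < β generalizing α β
  · rcases (not_lt.mp hlt).lt_or_eq with hgt | heq
    · exact (this hβ hα h' h hgt).symm
    · exact heq.symm
  obtain ⟨c, hc, hKLc⟩ :=
    exists_mem_Ioo_KL_mix_eq hsP hsQ hsum le_rfl hα (by rw [GJS_zero, mul_zero]) h
  obtain ⟨d, hd, hKLd⟩ := exists_mem_Ioo_KL_mix_eq hsP hsQ hsum hα.le hlt h h'
  have := KL_mix_strictAntiOn hsP hsQ hsum (ne_of_GJS_eq_mul hlam hα h) (mem_Ici.mpr hc.1.le)
    (mem_Ici.mpr (hα.le.trans hd.1.le)) (hc.2.trans hd.1)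
  simp only [hKLc, hKLd, lt_irrefl] at this

lemma exists_GJS_eq_mul_of_lt (hsP : FullSupport P) (hsQ : FullSupport Q)
    (hsum : ∑ x, P x = ∑ x, Q x) (hlam : 0 < lam) (hlt : lam < KL P Q) :
    ∃ α, 0 < α ∧ GJS P Q α = lam * α := by
  set f := fun α => GJS P Q α - lam * α
  have hderiv : ∀ α, 0 ≤ α → HasDerivAt f (KL P (mix P Q α) - lam) α := fun α hα =>
    (hasDerivAt_GJS_of_nonneg hsP hsQ hsum hα).sub
      (((hasDerivAt_id α).const_mul lam).congr_deriv (mul_one lam))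
  obtain ⟨ε, hε, hfε⟩ : ∃ ε, 0 < ε ∧ 0 < f ε := by
    have hslope := (hderiv 0 le_rfl).tendsto_slope_zero_right
    rw [mix_zero] at hslope
    obtain ⟨ε, hpos, hε⟩ :=
      ((hslope.eventually (lt_mem_nhds (sub_pos.mpr hlt))).and self_mem_nhdsWithin).exists
    have hf0 : f 0 = 0 := by simp [f, GJS_zero]
    rw [zero_add, hf0, sub_zero, smul_eq_mul] at hpos
    exact ⟨ε, hε, pos_of_mul_pos_right hpos (inv_nonneg.mpr (le_of_lt hε))⟩
  set J := KL P Q + KL Q P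
  have hJ : 0 ≤ J := add_nonneg (KL_nonneg (fun x => (hsP x).le) hsQ hsum)
    (KL_nonneg (fun x => (hsQ x).le) hsP hsum.symm)
  set A := ε + J / lam
  have hεA : ε ≤ A := le_add_of_nonneg_right (div_nonneg hJ hlam.le)
  have hfA : f A < 0 := by
    have hA : 0 ≤ A := hε.le.trans hεA
    have ht : A / (1 + A) * J ≤ J :=
      mul_le_of_le_one_left hJ ((div_le_one (by positivity)).mpr (by linarith))
    have hlamA : lam * A = lam * ε + J := by
      simp only [A]
      field_simp
    have := GJS_le hsP hsQ hA
    simp only [f]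
    nlinarith
  obtain ⟨c, hc, hfc⟩ := intermediate_value_Icc' hεA
    (fun c hc => (hderiv c (hε.le.trans hc.1)).continuousAt.continuousWithinAt) ⟨hfA.le, hfε.le⟩
  exact ⟨c, hε.trans_le hc.1, sub_eq_zero.mp hfc⟩

end GeneralizedJensenShannon

theorem gjs_fixed_point_iff_and_unique
    (P Q : 𝒳 → ℝ) (hP : IsPMF P) (hQ : IsPMF Q)
    (hsP : FullSupport P) (hsQ : FullSupport Q)
    (lam : ℝ) (hlam : 0 < lam) :
    ((∃ α : ℝ, 0 < α ∧ GJS P Q α = lam * α) ↔ lam < KL P Q) ∧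
    (∀ α α' : ℝ, 0 < α → 0 < α' →
      GJS P Q α = lam * α → GJS P Q α' = lam * α' → α = α') := by
  have hsum : ∑ x, P x = ∑ x, Q x := hP.2.trans hQ.2.symm
  exact ⟨⟨fun ⟨α, hα, h⟩ => lt_KL_of_GJS_eq_mul hsP hsQ hsum hlam hα h,
      exists_GJS_eq_mul_of_lt hsP hsQ hsum hlam⟩,
    fun α α' hα hα' h h' => eq_of_GJS_eq_mul hsP hsQ hsum hlam hα hα' h h'⟩

end SeqClass
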